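/- Let 𝒪 be the ring of integers of an imaginary quadratic field F, and let a, b ∈ 𝒪 with a𝒪 + b𝒪 = 𝒪. Then there exists x ∈ 𝒪 such that a + xb is not divisible in 𝒪 by any natural number n > 1. -/

import Mathlib

noncomputable section

/-- ω = (d + √d)/2 where √d = i·√(-d) for the discriminant d < 0. -/
def omg (d : ℤ) : ℂ := ((d : ℂ) + Complex.I * (Real.sqrt (-(d : ℝ)) : ℝ)) / 2

/-- d is the discriminant of an imaginary quadratic field. -/
def IsDisc (d : ℤ) : Prop :=
  d < 0 ∧ ((d % 4 = 1 ∧ Squarefree d) ∨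
    (d % 4 = 0 ∧ Squarefree (d / 4) ∧ (d / 4 % 4 = 2 ∨ d / 4 % 4 = 3)))

/-- The ring of integers 𝒪 = ℤ + ℤω of the imaginary quadratic field of
discriminant d, as a subset of ℂ. -/
def Oint (d : ℤ) : Set ℂ := {z | ∃ a b : ℤ, z = (a : ℂ) + (b : ℂ) * omg d}

/-- Q is a nonzero ideal of 𝒪. -/
def IsIdealOf (d : ℤ) (Q : Set ℂ) : Prop :=
  Q ⊆ Oint d ∧ (0 : ℂ) ∈ Q ∧ (∃ q ∈ Q, q ≠ 0) ∧
    (∀ x ∈ Q, ∀ y ∈ Q, x + y ∈ Q) ∧ (∀ r ∈ Oint d, ∀ q ∈ Q, r * q ∈ Q)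

/-!
Write elements of `𝒪 = ℤ + ℤω` in coordinates `u + vω`. Then `z` is divisible by `n` in `𝒪` exactly
when `n` divides both coordinates, so we need some `a + x b` with coprime coordinates. If `a` or `b`
is `0`, the other one is a unit and there is nothing to do. Otherwise one of `b`, `ω b` (call it
`w b`) is `ℤ`-linearly independent of `a`: the determinant of the coordinates of `z` and `z'` is
`Im (conj z * z') / Im ω`, and `conj a * b`, `conj a * ω b` are not both real. A prime dividing
all coordinates of `a` and of `w b` would divide `w = a (w x₀) + (w b) y₀`, which is impossible for
`w ∈ {1, ω}`. An integer `t` built from the primes of the determinant then makes the coordinates of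
`a + t w b` coprime.
-/

open ComplexConjugate

theorem Int.exists_isCoprime_add_mul {a₁ a₂ c₁ c₂ : ℤ} (hdet : a₁ * c₂ - a₂ * c₁ ≠ 0)
    (hprim : ∀ p : ℕ, p.Prime → ¬((p : ℤ) ∣ a₁ ∧ (p : ℤ) ∣ a₂ ∧ (p : ℤ) ∣ c₁ ∧ (p : ℤ) ∣ c₂)) :
    ∃ t : ℤ, IsCoprime (a₁ + t * c₁) (a₂ + t * c₂) := by
  classical
  -- The primes dividing both coordinates of `a + t c` divide the determinant; `t` is built so
  -- that each such prime either divides `t` but not `a`, or divides `a` but not `t`.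
  set S : Finset ℕ :=
    (a₁ * c₂ - a₂ * c₁).natAbs.primeFactors.filter fun p ↦ ¬((p : ℤ) ∣ a₁ ∧ (p : ℤ) ∣ a₂)
  set t : ℤ := ∏ p ∈ S, (p : ℤ)
  refine ⟨t, Int.isCoprime_iff_gcd_eq_one.mpr <| Nat.eq_one_iff_not_exists_prime_dvd.mpr ?_⟩
  intro q hq hqg
  have h₁ : (q : ℤ) ∣ a₁ + t * c₁ := (Int.natCast_dvd_natCast.mpr hqg).trans (Int.gcd_dvd_left _ _)
  have h₂ : (q : ℤ) ∣ a₂ + t * c₂ := (Int.natCast_dvd_natCast.mpr hqg).trans (Int.gcd_dvd_right _ _)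
  have hqdet : (q : ℤ) ∣ a₁ * c₂ - a₂ * c₁ := by
    have h := dvd_sub (h₁.mul_left c₂) (h₂.mul_left c₁)
    rwa [show c₂ * (a₁ + t * c₁) - c₁ * (a₂ + t * c₂) = a₁ * c₂ - a₂ * c₁ by ring] at h
  by_cases ha : (q : ℤ) ∣ a₁ ∧ (q : ℤ) ∣ a₂
  · have hqt : ¬(q : ℤ) ∣ t := by
      refine (Nat.prime_iff_prime_int.mp hq).not_dvd_finsetProd fun p hp hqp ↦ ?_
      obtain ⟨hpdet, hpa⟩ := Finset.mem_filter.mp hp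
      rw [(Nat.prime_dvd_prime_iff_eq hq (Nat.prime_of_mem_primeFactors hpdet)).mp
        (Int.natCast_dvd_natCast.mp hqp)] at ha
      exact hpa ha
    have hq' := Nat.prime_iff_prime_int.mp hq
    refine hprim q hq ⟨ha.1, ha.2, ?_, ?_⟩
    · exact (hq'.dvd_or_dvd ((dvd_add_right ha.1).mp h₁)).resolve_left hqt
    · exact (hq'.dvd_or_dvd ((dvd_add_right ha.2).mp h₂)).resolve_left hqt
  · have hqS : q ∈ S := Finset.mem_filter.mpr
      ⟨Nat.mem_primeFactors.mpr ⟨hq, Int.natCast_dvd.mp hqdet, Int.natAbs_ne_zero.mpr hdet⟩, ha⟩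
    have hqt : (q : ℤ) ∣ t := Finset.dvd_prod_of_mem _ hqS
    exact ha ⟨(dvd_add_left (hqt.mul_right c₁)).mp h₁, (dvd_add_left (hqt.mul_right c₂)).mp h₂⟩

theorem Int.four_dvd_sq_sub_self {d : ℤ} (h : d % 4 = 0 ∨ d % 4 = 1) : 4 ∣ d ^ 2 - d := by
  rw [Int.dvd_iff_emod_eq_zero, show d ^ 2 - d = d * (d - 1) by ring]
  rcases h with h | h <;> simp [Int.mul_emod, Int.sub_emod, h]

theorem Complex.intCast_add_mul_inj {ω : ℂ} (hω : ω.im ≠ 0) {u v u' v' : ℤ} :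
    (u : ℂ) + v * ω = u' + v' * ω ↔ u = u' ∧ v = v' := by
  refine ⟨fun h ↦ ?_, fun ⟨hu, hv⟩ ↦ by rw [hu, hv]⟩
  have him := congrArg Complex.im h
  have hre := congrArg Complex.re h
  simp only [add_im, add_re, mul_im, mul_re, intCast_re, intCast_im, zero_mul, add_zero,
    zero_add, sub_zero] at him hre
  obtain rfl : v = v' := by exact_mod_cast mul_right_cancel₀ hω him
  exact ⟨by exact_mod_cast add_right_cancel hre, rfl⟩

theorem Complex.im_conj_mul_intCast_add_mul (ω : ℂ) (u v u' v' : ℤ) :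
    (conj ((u : ℂ) + v * ω) * (u' + v' * ω)).im = (u * v' - v * u' : ℤ) * ω.im := by
  simp only [mul_im, mul_re, add_re, add_im, conj_re, conj_im, intCast_re, intCast_im]
  push_cast
  ring

theorem Complex.im_ne_zero_or_im_mul_ne_zero {z ω : ℂ} (hz : z ≠ 0) (hω : ω.im ≠ 0) :
    z.im ≠ 0 ∨ (ω * z).im ≠ 0 := by
  by_contra! h
  have hre : z.re ≠ 0 := fun hre ↦ hz (Complex.ext hre h.1)
  have := h.2
  rw [mul_im, h.1, mul_zero, zero_add] at this
  exact mul_ne_zero hω hre this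

theorem im_omg_pos {d : ℤ} (hd : d < 0) : 0 < (omg d).im := by
  have : 0 < Real.sqrt (-(d : ℝ)) := Real.sqrt_pos.mpr (by exact_mod_cast neg_pos.mpr hd)
  simpa [omg] using this

theorem omg_sq {d : ℤ} (hd : d ≤ 0) : 4 * omg d ^ 2 = 4 * d * omg d - (d ^ 2 - d) := by
  have hs : ((Real.sqrt (-(d : ℝ)) : ℝ) : ℂ) ^ 2 = -(d : ℂ) := by
    rw [← Complex.ofReal_pow, Real.sq_sqrt (by exact_mod_cast neg_nonneg.mpr hd)]
    push_cast; ring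
  unfold omg
  linear_combination Complex.I ^ 2 * hs - d * Complex.I_sq

namespace Oint

variable {d : ℤ}

theorem intCast_mem (n : ℤ) : (n : ℂ) ∈ Oint d := ⟨n, 0, by simp⟩

theorem one_mem : (1 : ℂ) ∈ Oint d := by exact_mod_cast intCast_mem (d := d) 1

theorem zero_mem : (0 : ℂ) ∈ Oint d := by exact_mod_cast intCast_mem (d := d) 0

theorem omg_mem : omg d ∈ Oint d := ⟨0, 1, by simp⟩

theorem add_mem {z w : ℂ} (hz : z ∈ Oint d) (hw : w ∈ Oint d) : z + w ∈ Oint d := by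
  obtain ⟨z₁, z₂, rfl⟩ := hz
  obtain ⟨w₁, w₂, rfl⟩ := hw
  exact ⟨z₁ + w₁, z₂ + w₂, by push_cast; ring⟩

theorem mul_mem (hd : d ≤ 0) (h4 : 4 ∣ d ^ 2 - d) {z w : ℂ} (hz : z ∈ Oint d)
    (hw : w ∈ Oint d) : z * w ∈ Oint d := by
  obtain ⟨e, he⟩ := h4
  obtain ⟨z₁, z₂, rfl⟩ := hz
  obtain ⟨w₁, w₂, rfl⟩ := hw
  have he' : ((d : ℂ) ^ 2 - d) = 4 * e := by exact_mod_cast he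
  refine ⟨z₁ * w₁ - e * z₂ * w₂, z₁ * w₂ + z₂ * w₁ + d * z₂ * w₂, ?_⟩
  push_cast
  linear_combination (z₂ * w₂ / 4 : ℂ) * (omg_sq hd - he')

theorem exists_eq_natCast_mul_iff (hd : d < 0) (n : ℕ) (u v : ℤ) :
    (∃ y ∈ Oint d, (u : ℂ) + v * omg d = n * y) ↔ (n : ℤ) ∣ u ∧ (n : ℤ) ∣ v := by
  constructor
  · rintro ⟨y, ⟨y₁, y₂, rfl⟩, h⟩
    have h' : (u : ℂ) + v * omg d = ((n * y₁ : ℤ) : ℂ) + ((n * y₂ : ℤ) : ℂ) * omg d := by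
      push_cast; linear_combination h
    obtain ⟨rfl, rfl⟩ := (Complex.intCast_add_mul_inj (im_omg_pos hd).ne').mp h'
    exact ⟨dvd_mul_right _ _, dvd_mul_right _ _⟩
  · rintro ⟨⟨u', rfl⟩, ⟨v', rfl⟩⟩
    exact ⟨u' + v' * omg d, ⟨u', v', rfl⟩, by push_cast; ring⟩

def IsPrimitive (d : ℤ) (z : ℂ) : Prop := ∀ n : ℕ, 1 < n → ¬∃ y ∈ Oint d, z = n * y

theorem isPrimitive_of_isCoprime (hd : d < 0) {u v : ℤ} (h : IsCoprime u v) :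
    IsPrimitive d (u + v * omg d) := by
  intro n hn hdvd
  obtain ⟨hu, hv⟩ := (exists_eq_natCast_mul_iff hd n u v).mp hdvd
  have := Int.isUnit_iff.mp (h.isUnit_of_dvd' hu hv)
  omega

theorem isPrimitive_one (hd : d < 0) : IsPrimitive d 1 := by
  simpa using isPrimitive_of_isCoprime hd (isCoprime_one_left (x := 0))

theorem isPrimitive_omg (hd : d < 0) : IsPrimitive d (omg d) := by
  simpa using isPrimitive_of_isCoprime hd (isCoprime_one_right (x := 0))

theorem IsPrimitive.of_mul (hd : d ≤ 0) (h4 : 4 ∣ d ^ 2 - d) {z w : ℂ}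
    (h : IsPrimitive d (z * w)) (hw : w ∈ Oint d) : IsPrimitive d z := by
  rintro n hn ⟨y, hy, rfl⟩
  exact h n hn ⟨y * w, mul_mem hd h4 hy hw, by ring⟩

theorem exists_isPrimitive_add_intCast_mul (hd : d < 0) (h4 : 4 ∣ d ^ 2 - d) {a b w x₀ y₀ : ℂ}
    (ha : a ∈ Oint d) (hb : b ∈ Oint d) (hw : w ∈ Oint d) (hx₀ : x₀ ∈ Oint d) (hy₀ : y₀ ∈ Oint d)
    (hab : a * x₀ + b * y₀ = 1) (hwprim : IsPrimitive d w) (hind : (conj a * (w * b)).im ≠ 0) :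
    ∃ t : ℤ, IsPrimitive d (a + t * w * b) := by
  obtain ⟨A₁, A₂, hA⟩ := ha
  obtain ⟨C₁, C₂, hC⟩ := mul_mem hd.le h4 hw hb
  have hdet : A₁ * C₂ - A₂ * C₁ ≠ 0 := by
    rw [hA, hC, Complex.im_conj_mul_intCast_add_mul] at hind
    exact_mod_cast left_ne_zero_of_mul hind
  have hprim : ∀ p : ℕ, p.Prime →
      ¬((p : ℤ) ∣ A₁ ∧ (p : ℤ) ∣ A₂ ∧ (p : ℤ) ∣ C₁ ∧ (p : ℤ) ∣ C₂) := by
    rintro p hp ⟨hA₁, hA₂, hC₁, hC₂⟩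
    obtain ⟨a', ha', hpa⟩ := (exists_eq_natCast_mul_iff hd p A₁ A₂).mpr ⟨hA₁, hA₂⟩
    obtain ⟨c', hc', hpc⟩ := (exists_eq_natCast_mul_iff hd p C₁ C₂).mpr ⟨hC₁, hC₂⟩
    rw [← hA] at hpa
    rw [← hC] at hpc
    refine hwprim p hp.one_lt
      ⟨a' * (w * x₀) + c' * y₀, add_mem (mul_mem hd.le h4 ha' (mul_mem hd.le h4 hw hx₀))
        (mul_mem hd.le h4 hc' hy₀), ?_⟩
    calc w = w * (a * x₀ + b * y₀) := by rw [hab, mul_one]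
      _ = a * (w * x₀) + w * b * y₀ := by ring
      _ = p * (a' * (w * x₀) + c' * y₀) := by rw [hpa, hpc]; ring
  obtain ⟨t, ht⟩ := Int.exists_isCoprime_add_mul hdet hprim
  refine ⟨t, ?_⟩
  convert isPrimitive_of_isCoprime hd ht using 1
  rw [hA, mul_assoc, hC]
  push_cast
  ring

end Oint

/-- if a𝒪 + b𝒪 = 𝒪 then some a + xb is not divisible by any
natural number > 1. -/
theorem stmt17 (d : ℤ) (hd : IsDisc d) (a b : ℂ)
    (ha : a ∈ Oint d) (hb : b ∈ Oint d)
    (hcop : ∃ x ∈ Oint d, ∃ y ∈ Oint d, a * x + b * y = 1) :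
    ∃ x ∈ Oint d, ∀ n : ℕ, 1 < n → ¬ ∃ y ∈ Oint d, a + x * b = (n : ℂ) * y := by
  obtain ⟨hneg, hmod⟩ := hd
  have h4 : 4 ∣ d ^ 2 - d := Int.four_dvd_sq_sub_self (hmod.symm.imp (·.1) (·.1))
  obtain ⟨x₀, hx₀, y₀, hy₀, hab⟩ := hcop
  by_cases hb0 : b = 0
  · have hax : a * x₀ = 1 := by simpa [hb0] using hab
    refine ⟨0, Oint.zero_mem, ?_⟩
    rw [zero_mul, add_zero]
    exact Oint.IsPrimitive.of_mul hneg.le h4 (hax ▸ Oint.isPrimitive_one hneg) hx₀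
  by_cases ha0 : a = 0
  · have hby : y₀ * b = 1 := by simpa [ha0, mul_comm] using hab
    refine ⟨y₀, hy₀, ?_⟩
    rw [ha0, zero_add, hby]
    exact Oint.isPrimitive_one hneg
  obtain ⟨w, hw, hwprim, hind⟩ :
      ∃ w ∈ Oint d, Oint.IsPrimitive d w ∧ (conj a * (w * b)).im ≠ 0 := by
    rcases Complex.im_ne_zero_or_im_mul_ne_zero (mul_ne_zero ((map_ne_zero conj).mpr ha0) hb0)
      (im_omg_pos hneg).ne' with h | h
    · exact ⟨1, Oint.one_mem, Oint.isPrimitive_one hneg, by rwa [one_mul]⟩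
    · exact ⟨omg d, Oint.omg_mem, Oint.isPrimitive_omg hneg, by rwa [mul_left_comm]⟩
  obtain ⟨t, ht⟩ :=
    Oint.exists_isPrimitive_add_intCast_mul hneg h4 ha hb hw hx₀ hy₀ hab hwprim hind
  exact ⟨t * w, Oint.mul_mem hneg.le h4 (Oint.intCast_mem t) hw, ht⟩
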